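/- Let n ≤ m be positive integers, q ∈ ℂ, and let R_n = ℂ[X]/(X^n − q), R_m = ℂ[Y]/(Y^m − q). Define the ℂ-linear map j : R_n → R_m on the monomial basis by j(x^c) = y^{c + (m−n)} for 0 ≤ c ≤ n − 1 (where x, y are the images of X, Y). Then for all a, b with 0 ≤ a, b ≤ n − 1 and n ≤ a + b ≤ 2n − 2, one has j(x^a · x^b) = j(x^a) · j(x^b). -/

import Mathlib

open Polynomial

namespace AdjoinRoot

variable {R : Type*} [CommRing R]

theorem root_X_pow_sub_C_pow (k : ℕ) (q : R) :
    root ((X : R[X]) ^ k - C q) ^ k = algebraMap R _ q := by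
  have h := mk_self (f := (X : R[X]) ^ k - C q)
  rwa [map_sub, map_pow, mk_X, mk_C, sub_eq_zero] at h

theorem root_X_pow_sub_C_pow_add (k c : ℕ) (q : R) :
    root ((X : R[X]) ^ k - C q) ^ (c + k) = q • root ((X : R[X]) ^ k - C q) ^ c := by
  rw [pow_add, root_X_pow_sub_C_pow, Algebra.smul_def, mul_comm]

end AdjoinRoot

open AdjoinRoot in
theorem stmt_4_general (n m : ℕ) (hnm : n ≤ m) (q : ℂ)
    (x : AdjoinRoot ((X : ℂ[X]) ^ n - C q))
    (hx : x = AdjoinRoot.root ((X : ℂ[X]) ^ n - C q))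
    (y : AdjoinRoot ((X : ℂ[X]) ^ m - C q))
    (hy : y = AdjoinRoot.root ((X : ℂ[X]) ^ m - C q))
    (j : AdjoinRoot ((X : ℂ[X]) ^ n - C q) →ₗ[ℂ] AdjoinRoot ((X : ℂ[X]) ^ m - C q))
    (hj : ∀ c : ℕ, c ≤ n - 1 → j (x ^ c) = y ^ (c + (m - n)))
    (a b : ℕ) (ha : a ≤ n - 1) (hb : b ≤ n - 1)
    (hab₁ : n ≤ a + b) :
    j (x ^ a * x ^ b) = j (x ^ a) * j (x ^ b) := by
  subst hx hy
  -- Writing a + b = c + n, the relations x^n = q and y^m = q turn both sides into q • y^(c + (m - n)).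
  obtain ⟨c, hc⟩ : ∃ c, a + b = c + n := ⟨a + b - n, by omega⟩
  have hdeg : a + (m - n) + (b + (m - n)) = c + (m - n) + m := by omega
  rw [hj a ha, hj b hb, ← pow_add, ← pow_add, hc, hdeg, root_X_pow_sub_C_pow_add,
    root_X_pow_sub_C_pow_add, map_smul, hj c (by omega)]

/-- The stabilization map `j : ℂ[X]/(X^n - q) → ℂ[Y]/(Y^m - q)`, defined on the
monomial basis by `j(x^c) = y^(c + (m - n))`, is multiplicative on products
`x^a * x^b` having a quantum correction (`n ≤ a + b ≤ 2n - 2`). -/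
theorem stmt_4 (n m : ℕ) (hn : 1 ≤ n) (hnm : n ≤ m) (q : ℂ)
    (x : AdjoinRoot ((X : ℂ[X]) ^ n - C q))
    (hx : x = AdjoinRoot.root ((X : ℂ[X]) ^ n - C q))
    (y : AdjoinRoot ((X : ℂ[X]) ^ m - C q))
    (hy : y = AdjoinRoot.root ((X : ℂ[X]) ^ m - C q))
    (j : AdjoinRoot ((X : ℂ[X]) ^ n - C q) →ₗ[ℂ] AdjoinRoot ((X : ℂ[X]) ^ m - C q))
    (hj : ∀ c : ℕ, c ≤ n - 1 → j (x ^ c) = y ^ (c + (m - n)))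
    (a b : ℕ) (ha : a ≤ n - 1) (hb : b ≤ n - 1)
    (hab₁ : n ≤ a + b) (hab₂ : a + b ≤ 2 * n - 2) :
    j (x ^ a * x ^ b) = j (x ^ a) * j (x ^ b) :=
  stmt_4_general n m hnm q x hx y hy j hj a b ha hb hab₁
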